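/- arXiv:1801.09817 — 2 statements merged into one kernel-verified Lean document; each statement's English description precedes it below -/
import Mathlib

section
/- Stability of the compatibility condition under matrix perturbation: suppose Σ satisfies the compatibility condition ν₁² (∑_{j∈S}|bⱼ|)² ≤ |S|(bᵀΣb) for all b with ∑_{j∉S}|bⱼ| ≤ ξ₁∑_{j∈S}|bⱼ|, and suppose Σ̃ satisfies |bᵀ(Σ̃-Σ)b| ≤ λ‖b‖₁² for all b. If (1+ξ₁)²ν₁^{-2}|S|λ ≤ η < 1, then for all b with ∑_{j∉S}|bⱼ| ≤ ξ₁∑_{j∈S}|bⱼ|, one has (1-η)ν₁²(∑_{j∈S}|bⱼ|)² ≤ |S|(bᵀΣ̃b). -/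
/-! On the cone, `‖b‖₁ ≤ (1 + ξ₁) ∑_{j∈S} |bⱼ|`, so replacing `Σ` by `Σ̃` lowers `|S| bᵀΣb` by at most
`|S| λ (1 + ξ₁)² (∑_{j∈S} |bⱼ|)²`, which the smallness condition bounds by `η ν₁² (∑_{j∈S} |bⱼ|)²`. -/

open Matrix Finset

section

variable {ι : Type*} [Fintype ι]

theorem sum_abs_le_of_sum_abs_compl_le [DecidableEq ι] {S : Finset ι} {ξ : ℝ} {b : ι → ℝ}
    (hb : ∑ j ∈ Sᶜ, |b j| ≤ ξ * ∑ j ∈ S, |b j|) :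
    ∑ j, |b j| ≤ (1 + ξ) * ∑ j ∈ S, |b j| := by
  rw [← sum_add_sum_compl S]
  linarith

theorem dotProduct_mulVec_sub_le_of_abs_le {A B : Matrix ι ι ℝ} {lam : ℝ}
    (hperturb : ∀ b : ι → ℝ, |b ⬝ᵥ ((B - A) *ᵥ b)| ≤ lam * (∑ j, |b j|) ^ 2) (b : ι → ℝ) :
    b ⬝ᵥ (A *ᵥ b) - lam * (∑ j, |b j|) ^ 2 ≤ b ⬝ᵥ (B *ᵥ b) := by
  have h := (abs_le.mp (hperturb b)).1
  rw [sub_mulVec, dotProduct_sub] at h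
  linarith

theorem compatibility_of_quadratic_perturbation [DecidableEq ι] {A B : Matrix ι ι ℝ} {S : Finset ι}
    {ν ξ lam : ℝ} (hlam : 0 ≤ lam)
    (hcompat : ∀ b : ι → ℝ, ∑ j ∈ Sᶜ, |b j| ≤ ξ * ∑ j ∈ S, |b j| →
      ν ^ 2 * (∑ j ∈ S, |b j|) ^ 2 ≤ #S * (b ⬝ᵥ (A *ᵥ b)))
    (hperturb : ∀ b : ι → ℝ, |b ⬝ᵥ ((B - A) *ᵥ b)| ≤ lam * (∑ j, |b j|) ^ 2)
    {b : ι → ℝ} (hb : ∑ j ∈ Sᶜ, |b j| ≤ ξ * ∑ j ∈ S, |b j|) :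
    (ν ^ 2 - (1 + ξ) ^ 2 * #S * lam) * (∑ j ∈ S, |b j|) ^ 2 ≤ #S * (b ⬝ᵥ (B *ᵥ b)) := by
  have hl1 : (∑ j, |b j|) ^ 2 ≤ ((1 + ξ) * ∑ j ∈ S, |b j|) ^ 2 :=
    pow_le_pow_left₀ (sum_nonneg fun j _ => abs_nonneg _) (sum_abs_le_of_sum_abs_compl_le hb) 2
  calc (ν ^ 2 - (1 + ξ) ^ 2 * #S * lam) * (∑ j ∈ S, |b j|) ^ 2
      ≤ #S * (b ⬝ᵥ (A *ᵥ b)) - #S * (lam * ((1 + ξ) * ∑ j ∈ S, |b j|) ^ 2) := by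
        linarith [hcompat b hb]
    _ ≤ #S * (b ⬝ᵥ (A *ᵥ b) - lam * (∑ j, |b j|) ^ 2) := by
        rw [mul_sub]
        gcongr
    _ ≤ #S * (b ⬝ᵥ (B *ᵥ b)) := by
        gcongr
        exact dotProduct_mulVec_sub_le_of_abs_le hperturb b

end

theorem stmt_10_general (p : ℕ) (Sig SigTilde : Matrix (Fin (p + 1)) (Fin (p + 1)) ℝ)
    (S : Finset (Fin (p + 1)))
    (nu1 xi1 lam eta : ℝ) (hnu : 0 < nu1) (hlam : 0 ≤ lam)
    (hcompat : ∀ b : Fin (p + 1) → ℝ,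
      (∑ j ∈ Sᶜ, |b j|) ≤ xi1 * ∑ j ∈ S, |b j| →
      nu1 ^ 2 * (∑ j ∈ S, |b j|) ^ 2 ≤ (S.card : ℝ) * (b ⬝ᵥ (Sig *ᵥ b)))
    (hperturb : ∀ b : Fin (p + 1) → ℝ,
      |b ⬝ᵥ ((SigTilde - Sig) *ᵥ b)| ≤ lam * (∑ j, |b j|) ^ 2)
    (hsmall : (1 + xi1) ^ 2 * nu1⁻¹ ^ 2 * (S.card : ℝ) * lam ≤ eta) :
    ∀ b : Fin (p + 1) → ℝ,
      (∑ j ∈ Sᶜ, |b j|) ≤ xi1 * ∑ j ∈ S, |b j| →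
      (1 - eta) * nu1 ^ 2 * (∑ j ∈ S, |b j|) ^ 2 ≤ (S.card : ℝ) * (b ⬝ᵥ (SigTilde *ᵥ b)) := by
  intro b hb
  have hsmall' : (1 + xi1) ^ 2 * S.card * lam ≤ eta * nu1 ^ 2 :=
    calc (1 + xi1) ^ 2 * S.card * lam
        = (1 + xi1) ^ 2 * nu1⁻¹ ^ 2 * S.card * lam * nu1 ^ 2 := by field_simp
      _ ≤ eta * nu1 ^ 2 := by gcongr
  calc (1 - eta) * nu1 ^ 2 * (∑ j ∈ S, |b j|) ^ 2
      ≤ (nu1 ^ 2 - (1 + xi1) ^ 2 * S.card * lam) * (∑ j ∈ S, |b j|) ^ 2 := by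
        gcongr
        linarith
    _ ≤ S.card * (b ⬝ᵥ (SigTilde *ᵥ b)) :=
        compatibility_of_quadratic_perturbation hlam hcompat hperturb hb

theorem stmt_10 (p : ℕ) (Sig SigTilde : Matrix (Fin (p + 1)) (Fin (p + 1)) ℝ)
    (hsym : Sig.IsSymm) (hsym' : SigTilde.IsSymm)
    (S : Finset (Fin (p + 1))) (hSne : S.Nonempty)
    (nu1 xi1 lam eta : ℝ) (hnu : 0 < nu1) (hxi : 1 < xi1) (hlam : 0 ≤ lam)
    (heta0 : 0 < eta) (heta1 : eta < 1)
    (hcompat : ∀ b : Fin (p + 1) → ℝ,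
      (∑ j ∈ Sᶜ, |b j|) ≤ xi1 * ∑ j ∈ S, |b j| →
      nu1 ^ 2 * (∑ j ∈ S, |b j|) ^ 2 ≤ (S.card : ℝ) * (b ⬝ᵥ (Sig *ᵥ b)))
    (hperturb : ∀ b : Fin (p + 1) → ℝ,
      |b ⬝ᵥ ((SigTilde - Sig) *ᵥ b)| ≤ lam * (∑ j, |b j|) ^ 2)
    (hsmall : (1 + xi1) ^ 2 * nu1⁻¹ ^ 2 * (S.card : ℝ) * lam ≤ eta) :
    ∀ b : Fin (p + 1) → ℝ,
      (∑ j ∈ Sᶜ, |b j|) ≤ xi1 * ∑ j ∈ S, |b j| →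
      (1 - eta) * nu1 ^ 2 * (∑ j ∈ S, |b j|) ^ 2 ≤ (S.card : ℝ) * (b ⬝ᵥ (SigTilde *ᵥ b)) :=
  stmt_10_general p Sig SigTilde S nu1 xi1 lam eta hnu hlam hcompat hperturb hsmall
end

section
/- Lower bound on the symmetrized Bregman divergence for a self-scaling link: suppose ψ: ℝ → ℝ is differentiable with derivative ψ₂ satisfying ψ₂(u) ≤ ψ₂(u′)·e^{C₃|u-u′|} for all u, u′, and wᵢ ≥ 0, |h′ᵢ - hᵢ| ≤ C₄ for all i = 1,…,n. Then (1/n)∑ᵢ wᵢ(ψ(h′ᵢ) - ψ(hᵢ))(h′ᵢ - hᵢ) ≥ ((1-e^{-C₃C₄})/(C₃C₄)) · (1/n)∑ᵢ wᵢ ψ₂(hᵢ)(h′ᵢ - hᵢ)². -/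
/-!
On the segment from `x` to `y`, self-scaling gives `ψ₂(x + t(y - x)) ≥ ψ₂(x) e^{-C₃C₄t}`, so
`t ↦ (ψ(x + t(y - x)) - ψ(x))(y - x)` grows at least as fast as
`ψ₂(x)(y - x)² ∫₀ᵗ e^{-C₃C₄s} ds`. At `t = 1` this is the coordinatewise inequality with constant
`∫₀¹ e^{-C₃C₄s} ds = (1 - e^{-C₃C₄})/(C₃C₄)`; it remains to sum with the weights `wᵢ ≥ 0`.
-/

open Real Set intervalIntegral

theorem integral_exp_neg_mul_zero_one (k : ℝ) :
    ∫ u in (0 : ℝ)..1, exp (-(k * u)) = if k = 0 then 1 else (1 - exp (-k)) / k := by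
  split_ifs with hk
  · simp [hk]
  · simp_rw [← neg_mul]
    rw [integral_comp_mul_left (fun u => exp u) (neg_ne_zero.mpr hk), integral_exp]
    simp only [mul_zero, exp_zero, mul_one, smul_eq_mul]
    field_simp
    ring

def IsSelfScaling (C : ℝ) (f : ℝ → ℝ) : Prop :=
  ∀ u u', f u ≤ f u' * exp (C * |u - u'|)

namespace IsSelfScaling

theorem mul_exp_neg_le {C : ℝ} {f : ℝ → ℝ} (hf : IsSelfScaling C f) (x y : ℝ) :
    f x * exp (-(C * |y - x|)) ≤ f y := by
  rw [exp_neg, ← div_eq_mul_inv, div_le_iff₀ (exp_pos _), abs_sub_comm]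
  exact hf x y

theorem mul_exp_neg_le_along_segment {C C' : ℝ} {f : ℝ → ℝ} (hf : IsSelfScaling C f)
    (hpos : ∀ u, 0 ≤ f u) (hC : 0 ≤ C) {x d t : ℝ} (hd : |d| ≤ C') (ht : 0 ≤ t) :
    f x * exp (-(C * C' * t)) ≤ f (x + t * d) := by
  have hdist : C * |x + t * d - x| ≤ C * C' * t := by
    rw [add_sub_cancel_left, abs_mul, abs_of_nonneg ht, mul_assoc, mul_comm t]
    gcongr
  calc f x * exp (-(C * C' * t)) ≤ f x * exp (-(C * |x + t * d - x|)) := by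
        gcongr
        exact hpos x
    _ ≤ f (x + t * d) := hf.mul_exp_neg_le x _

theorem integral_exp_mul_sq_le_sub_mul {psi psi2 : ℝ → ℝ} {C C' : ℝ}
    (hderiv : ∀ u, HasDerivAt psi (psi2 u) u) (hpos : ∀ u, 0 ≤ psi2 u) (hC : 0 ≤ C)
    (hself : IsSelfScaling C psi2) {x y : ℝ} (hxy : |y - x| ≤ C') :
    (∫ u in (0 : ℝ)..1, exp (-(C * C' * u))) * (psi2 x * (y - x) ^ 2)
      ≤ (psi y - psi x) * (y - x) := by
  set d := y - x
  set E : ℝ → ℝ := fun t => ∫ u in (0 : ℝ)..t, exp (-(C * C' * u))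
  have hcont : Continuous fun u => exp (-(C * C' * u)) := by fun_prop
  have hE : ∀ t, HasDerivAt E (exp (-(C * C' * t))) t := fun t =>
    (hcont.integral_hasStrictDerivAt 0 t).hasDerivAt
  have hpath : ∀ t, HasDerivAt (fun t => psi (x + t * d)) (psi2 (x + t * d) * d) t := fun t =>
    (hderiv _).comp t (by simpa using ((hasDerivAt_id t).mul_const d).const_add x)
  set g : ℝ → ℝ := fun t => (psi (x + t * d) - psi x) * d - psi2 x * d ^ 2 * E t
  have hg : ∀ t, HasDerivAt g ((psi2 (x + t * d) - psi2 x * exp (-(C * C' * t))) * d ^ 2) t :=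
    fun t => (((hpath t).sub_const (psi x)).mul_const d).fun_sub
      ((hE t).const_mul (psi2 x * d ^ 2)) |>.congr_deriv (by ring)
  have hmono : MonotoneOn g (Ici 0) := by
    refine monotoneOn_of_hasDerivWithinAt_nonneg (convex_Ici 0)
      (fun t _ => (hg t).continuousAt.continuousWithinAt) (fun t _ => (hg t).hasDerivWithinAt) ?_
    intro t ht
    rw [interior_Ici, mem_Ioi] at ht
    exact mul_nonneg (sub_nonneg.mpr (hself.mul_exp_neg_le_along_segment hpos hC hxy ht.le))
      (sq_nonneg d)
  have hg01 := hmono self_mem_Ici (mem_Ici.mpr zero_le_one) zero_le_one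
  simp only [g, E, zero_mul, add_zero, sub_self, integral_same, mul_zero, one_mul,
    show x + d = y from add_sub_cancel x y] at hg01
  linarith

end IsSelfScaling

theorem stmt_12_general (n : ℕ) (psi psi2 : ℝ → ℝ)
    (hderiv : ∀ u, HasDerivAt psi (psi2 u) u)
    (hpos : ∀ u, 0 ≤ psi2 u)
    (C3 C4 : ℝ) (hC3 : 0 ≤ C3)
    (hself : ∀ u u', psi2 u ≤ psi2 u' * Real.exp (C3 * |u - u'|))
    (w h h' : Fin n → ℝ) (hw : ∀ i, 0 ≤ w i) (hclose : ∀ i, |h' i - h i| ≤ C4) :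
    (if C3 * C4 = 0 then 1 else (1 - Real.exp (-(C3 * C4))) / (C3 * C4)) *
        ((1 / (n : ℝ)) * ∑ i, w i * psi2 (h i) * (h' i - h i) ^ 2)
      ≤ (1 / (n : ℝ)) * ∑ i, w i * (psi (h' i) - psi (h i)) * (h' i - h i) := by
  rw [← integral_exp_neg_mul_zero_one, mul_left_comm, Finset.mul_sum]
  refine mul_le_mul_of_nonneg_left (Finset.sum_le_sum fun i _ => ?_) (by positivity)
  have hi := IsSelfScaling.integral_exp_mul_sq_le_sub_mul hderiv hpos hC3 hself (hclose i)
  linarith [mul_le_mul_of_nonneg_left hi (hw i)]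

theorem stmt_12 (n : ℕ) (psi psi2 : ℝ → ℝ)
    (hderiv : ∀ u, HasDerivAt psi (psi2 u) u)
    (hpos : ∀ u, 0 ≤ psi2 u)
    (C3 C4 : ℝ) (hC3 : 0 ≤ C3) (hC4 : 0 ≤ C4)
    (hself : ∀ u u', psi2 u ≤ psi2 u' * Real.exp (C3 * |u - u'|))
    (w h h' : Fin n → ℝ) (hw : ∀ i, 0 ≤ w i) (hclose : ∀ i, |h' i - h i| ≤ C4) :
    (if C3 * C4 = 0 then 1 else (1 - Real.exp (-(C3 * C4))) / (C3 * C4)) *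
        ((1 / (n : ℝ)) * ∑ i, w i * psi2 (h i) * (h' i - h i) ^ 2)
      ≤ (1 / (n : ℝ)) * ∑ i, w i * (psi (h' i) - psi (h i)) * (h' i - h i) :=
  stmt_12_general n psi psi2 hderiv hpos C3 C4 hC3 hself w h h' hw hclose
end
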